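/- arXiv:2012.11281 — 6 statements merged into one kernel-verified Lean document; each statement's English description precedes it below -/
import Mathlib

section
/- Let σ_{XY·W} denote the partial covariance of X and Y given W, defined by σ_{XY·W} = σ_{XY} - σ_{XW}·σ_{WY}/σ²_W (with σ²_W > 0). If σ_{XW·R} = 0, σ_{YW·R} = 0, and σ_{XY·R} = 0 (i.e., each of the partial covariances of X and W, Y and W, and X and Y given R vanish), then σ_{XY·W} = σ_{XY} · σ²_{R·W}/σ²_R, where σ²_{R·W} = σ²_R - σ_{RW}²/σ²_W. -/
/-- Lemma aux1 (unconditional case): if the partial covariances of X,W and Y,W and X,Y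
given R all vanish, then σ_{XY·W} = σ_{XY} · σ²_{R·W}/σ²_R. -/
theorem stmt0 (sXY sXW sYW sXR sYR sRW vR vW : ℝ)
    (hvR : 0 < vR) (hvW : 0 < vW)
    (hXW : sXW - sXR * sRW / vR = 0)
    (hYW : sYW - sYR * sRW / vR = 0)
    (hXY : sXY - sXR * sYR / vR = 0) :
    sXY - sXW * sYW / vW = sXY * ((vR - sRW ^ 2 / vW) / vR) := by
  have hR := hvR.ne'
  have hW := hvW.ne'
  have e1 : sXW = sXR * sRW / vR := by linarith
  have e2 : sYW = sYR * sRW / vR := by linarith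
  have e3 : sXY = sXR * sYR / vR := by linarith
  subst e1 e2 e3
  field_simp
end

section
/- Let partial covariance given W be defined by σ_{AB·W} = σ_{AB} - σ_{AW}σ_{WB}/σ²_W with σ²_W > 0, and partial variance σ²_{X·W} = σ²_X - σ_{XW}²/σ²_W with σ²_X > 0. If the partial covariance of Y and W given X vanishes, i.e., σ_{YW} - σ_{YX}σ_{XW}/σ²_X = 0, then σ_{XY·W} = σ_{XY} · σ²_{X·W}/σ²_X. -/
/-- Lemma aux2 (unconditional case): if σ_{YW·X} = 0 then
σ_{XY·W} = σ_{XY} · σ²_{X·W}/σ²_X. -/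
theorem stmt1 (sXY sXW sYW vX vW : ℝ)
    (hvX : 0 < vX) (hvW : 0 < vW)
    (hYW : sYW - sXY * sXW / vX = 0) :
    sXY - sXW * sYW / vW = sXY * ((vX - sXW ^ 2 / vW) / vX) := by
  have h : sYW = sXY * sXW / vX := by linarith
  subst h
  field_simp
end

section
/- For jointly Gaussian real random variables X, Y, W with Var(W) > 0, the conditional covariance Cov(X,Y | W) (which for Gaussians equals the partial covariance) has the same sign as, is zero iff, the quantity σ_{XY} - σ_{XW}σ_{WY}/σ²_W; moreover if additionally σ_{YW}σ²_X = σ_{YX}σ_{XW} (the condition Y ⫫ W | X for Gaussians with Var(X)>0), then sign(σ_{XY·W}) = sign(σ_{XY}). -/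
lemma sign_mul_pos {c x : ℝ} (hc : 0 < c) : Real.sign (c * x) = Real.sign x := by
  rcases lt_trichotomy x 0 with h | h | h
  · rw [Real.sign_of_neg h, Real.sign_of_neg (mul_neg_of_pos_of_neg hc h)]
  · simp [h]
  · rw [Real.sign_of_pos h, Real.sign_of_pos (mul_pos hc h)]

/-- No sign reversal: with σ²_X, σ²_W > 0, the partial variance σ²_{X·W} > 0, and if
σ_{YW}·σ²_X = σ_{YX}·σ_{XW} (i.e. Y ⫫ W | X for Gaussians), then the partial covariance
σ_{XY·W} = σ_{XY} - σ_{XW}σ_{WY}/σ²_W has the same sign as σ_{XY}. -/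
theorem stmt3 (sXY sXW sYW vX vW : ℝ)
    (hvX : 0 < vX) (hvW : 0 < vW)
    (hpart : 0 < vX - sXW ^ 2 / vW)
    (hci : sYW * vX = sXY * sXW) :
    Real.sign (sXY - sXW * sYW / vW) = Real.sign sXY := by
  have hsYW : sYW = sXY * sXW / vX := by field_simp; linarith [hci]
  have key : sXY - sXW * sYW / vW = ((vX - sXW ^ 2 / vW) / vX) * sXY := by
    rw [hsYW]; field_simp
  rw [key, sign_mul_pos (div_pos hpart hvX)]
end

section
/- In the model X = ε_X, Y = αX + ε_Y, Z = δY + ε_Z with independent centered errors of positive variances, σ_{XY·Z} ≠ α·σ²_{X·Z} whenever α ≠ 0 and δ ≠ 0, where σ_{XY·Z} and σ²_{X·Z} are the partial covariance and partial variance given Z. -/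
/-
Write every variable as a linear combination of the errors: `X = ε₀`, `Y = α ε₀ + ε₁` and
`Z = δα ε₀ + δ ε₁ + ε₂`. Since the errors are uncorrelated, with variances `v₀, v₁, v₂`,
the covariance of two such combinations is `∑ aᵢ bᵢ vᵢ`. With `D = Var Z` this gives
`D · (σ_{XY·Z} - α σ²_{X·Z}) = -α δ² v₀ v₁`, which is nonzero.
-/

open MeasureTheory ProbabilityTheory

/-- Covariance of two real random variables. -/
noncomputable def cov {Ω : Type*} [MeasurableSpace Ω] (μ : Measure Ω) (X Y : Ω → ℝ) : ℝ :=
  ∫ ω, X ω * Y ω ∂μ - (∫ ω, X ω ∂μ) * (∫ ω, Y ω ∂μ)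

lemma cov_eq_covariance {Ω : Type*} [MeasurableSpace Ω] {μ : Measure Ω} [IsProbabilityMeasure μ]
    {X Y : Ω → ℝ} (hX : MemLp X 2 μ) (hY : MemLp Y 2 μ) :
    cov μ X Y = covariance X Y μ := by
  rw [covariance_eq_sub hX hY, cov]
  rfl

lemma cov_sum_mul_sum_mul_of_pairwise_cov_eq_zero {Ω ι : Type*} [MeasurableSpace Ω] {μ : Measure Ω}
    [IsProbabilityMeasure μ] [Fintype ι] {e : ι → Ω → ℝ} (hL2 : ∀ i, MemLp (e i) 2 μ)
    (hunc : Pairwise fun i j ↦ cov μ (e i) (e j) = 0) (a b : ι → ℝ) :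
    cov μ (fun ω ↦ ∑ i, a i * e i ω) (fun ω ↦ ∑ i, b i * e i ω)
      = ∑ i, a i * b i * cov μ (e i) (e i) := by
  have hsum (c : ι → ℝ) : MemLp (fun ω ↦ ∑ i, c i * e i ω) 2 μ :=
    memLp_finsetSum _ fun i _ ↦ (hL2 i).const_mul (c i)
  rw [cov_eq_covariance (hsum a) (hsum b),
    covariance_fun_sum_fun_sum (fun i ↦ (hL2 i).const_mul (a i)) fun i ↦ (hL2 i).const_mul (b i)]
  refine Finset.sum_congr rfl fun i _ ↦ ?_
  rw [Finset.sum_eq_single i]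
  · rw [covariance_const_mul_left, covariance_const_mul_right,
      cov_eq_covariance (hL2 i) (hL2 i)]
    ring
  · intro j _ hji
    rw [covariance_const_mul_left, covariance_const_mul_right,
      ← cov_eq_covariance (hL2 i) (hL2 j), hunc hji.symm, mul_zero, mul_zero]
  · simp

lemma partial_cov_ne_mul_partial_var {α δ v₀ v₁ v₂ : ℝ} (hα : α ≠ 0) (hδ : δ ≠ 0)
    (hv₀ : 0 < v₀) (hv₁ : 0 < v₁) (hv₂ : 0 < v₂) :
    α * v₀ - δ * α * v₀ * (δ * (α ^ 2 * v₀ + v₁)) / (δ ^ 2 * (α ^ 2 * v₀ + v₁) + v₂)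
      ≠ α * (v₀ - (δ * α * v₀) ^ 2 / (δ ^ 2 * (α ^ 2 * v₀ + v₁) + v₂)) := by
  have hD : 0 < δ ^ 2 * (α ^ 2 * v₀ + v₁) + v₂ := by positivity
  have hdiff : α * v₀ - δ * α * v₀ * (δ * (α ^ 2 * v₀ + v₁)) / (δ ^ 2 * (α ^ 2 * v₀ + v₁) + v₂)
      - α * (v₀ - (δ * α * v₀) ^ 2 / (δ ^ 2 * (α ^ 2 * v₀ + v₁) + v₂))
      = -(α * δ ^ 2 * v₀ * v₁ / (δ ^ 2 * (α ^ 2 * v₀ + v₁) + v₂)) := by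
    field_simp
    ring
  rw [← sub_ne_zero, hdiff, neg_ne_zero]
  positivity

theorem stmt6_general {Ω : Type*} [MeasurableSpace Ω] (μ : Measure Ω) [IsProbabilityMeasure μ]
    (α δ : ℝ) (hα : α ≠ 0) (hδ : δ ≠ 0) (e : Fin 3 → Ω → ℝ) (X Y Z : Ω → ℝ)
    (hindep : iIndepFun e μ)
    (hL2 : ∀ i, MemLp (e i) 2 μ)
    (hvar : ∀ i, 0 < cov μ (e i) (e i))
    (hX : ∀ ω, X ω = e 0 ω)
    (hY : ∀ ω, Y ω = α * X ω + e 1 ω)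
    (hZ : ∀ ω, Z ω = δ * Y ω + e 2 ω) :
    cov μ X Y - cov μ X Z * cov μ Z Y / cov μ Z Z
      ≠ α * (cov μ X X - (cov μ X Z) ^ 2 / cov μ Z Z) := by
  have hunc : Pairwise fun i j ↦ cov μ (e i) (e j) = 0 := fun i j hij ↦
    (cov_eq_covariance (hL2 i) (hL2 j)).trans
      ((hindep.indepFun hij).covariance_eq_zero (hL2 i) (hL2 j))
  have hcov := cov_sum_mul_sum_mul_of_pairwise_cov_eq_zero hL2 hunc
  have hX' : X = fun ω ↦ ∑ i, ![1, 0, 0] i * e i ω := by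
    ext ω; simp [Fin.sum_univ_three, hX]
  have hY' : Y = fun ω ↦ ∑ i, ![α, 1, 0] i * e i ω := by
    ext ω; simp [Fin.sum_univ_three, hY, hX]
  have hZ' : Z = fun ω ↦ ∑ i, ![δ * α, δ, 1] i * e i ω := by
    ext ω; simp [Fin.sum_univ_three, hZ, hY, hX]; ring
  rw [hX', hY', hZ']
  simp only [hcov]
  simp only [Fin.sum_univ_three, Matrix.cons_val_zero, Matrix.cons_val_one,
    Matrix.cons_val_two, Matrix.head_cons, Matrix.tail_cons]
  convert partial_cov_ne_mul_partial_var hα hδ (hvar 0) (hvar 1) (hvar 2) using 2 <;> ring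

/-- Counterexample: in the model X = ε_X, Y = αX + ε_Y, Z = δY + ε_Z, naively replacing
(co)variances by partial (co)variances fails: σ_{XY·Z} ≠ α·σ²_{X·Z} when α ≠ 0, δ ≠ 0. -/
theorem stmt6 {Ω : Type*} [MeasurableSpace Ω] (μ : Measure Ω) [IsProbabilityMeasure μ]
    (α δ : ℝ) (hα : α ≠ 0) (hδ : δ ≠ 0) (e : Fin 3 → Ω → ℝ) (X Y Z : Ω → ℝ)
    (hmeas : ∀ i, Measurable (e i))
    (hindep : iIndepFun e μ)
    (hL2 : ∀ i, MemLp (e i) 2 μ)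
    (hmean : ∀ i, ∫ ω, e i ω ∂μ = 0)
    (hvar : ∀ i, 0 < cov μ (e i) (e i))
    (hX : ∀ ω, X ω = e 0 ω)
    (hY : ∀ ω, Y ω = α * X ω + e 1 ω)
    (hZ : ∀ ω, Z ω = δ * Y ω + e 2 ω) :
    cov μ X Y - cov μ X Z * cov μ Z Y / cov μ Z Z
      ≠ α * (cov μ X X - (cov μ X Z) ^ 2 / cov μ Z Z) :=
  stmt6_general μ α δ hα hδ e X Y Z hindep hL2 hvar hX hY hZ
end

section
/- For the model X = ε_X, Y = αX + ε_Y, S = δY + ε_S (diagram X → Y → S) with independent centered errors of positive variances and α ≠ 0, δ ≠ 0, the covariance of X and Y is not collapsible over S: σ_{XY·S} ≠ σ_{XY}; and the regression coefficient is not collapsible either: β_{YX·S} = σ_{XY·S}/σ²_{X·S} ≠ σ_{XY}/σ²_X = β_{YX}. Nevertheless sign(σ_{XY·S}) = sign(σ_{XY}). -/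
/-!
Since `ε_S` is uncorrelated with `X` and `Y`, we get `σ_XS = δ σ_XY`, `σ_SY = δ σ_YY` and
`σ_SS = δ² σ_YY + v_S`, hence `σ_XY·S = (v_S / σ_SS) σ_XY`: conditioning on `S` shrinks the
covariance by a factor strictly between `0` and `1`, which changes its value but not its sign.
Likewise `σ²_X·S = (v_S σ_XX + δ² (σ_XX σ_YY - σ_XY²)) / σ_SS`, so the regression coefficient
collapses only if `X` and `Y` are perfectly correlated, which `v_Y > 0` rules out.
-/

open MeasureTheory ProbabilityTheory

section Covariance

variable {Ω : Type*} [MeasurableSpace Ω] {μ : Measure Ω} {U V W ε : Ω → ℝ}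

lemma cov_comm : cov μ U V = cov μ V U := by
  simp only [cov, mul_comm]

variable [IsProbabilityMeasure μ]

lemma cov_eq_covariance_s10 (hU : MemLp U 2 μ) (hV : MemLp V 2 μ) : cov μ U V = cov[U, V; μ] :=
  (covariance_eq_sub hU hV).symm

lemma cov_smul_add_right (hW : MemLp W 2 μ) (hV : MemLp V 2 μ) (hε : MemLp ε 2 μ)
    (h : cov μ W ε = 0) (c : ℝ) : cov μ W (c • V + ε) = c * cov μ W V := by
  rw [cov_eq_covariance_s10 hW hε] at h
  rw [cov_eq_covariance_s10 hW ((hV.const_smul c).add hε), cov_eq_covariance_s10 hW hV,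
    covariance_add_right hW (hV.const_smul c) hε, covariance_smul_right, h, add_zero]

lemma cov_smul_add_self (hV : MemLp V 2 μ) (hε : MemLp ε 2 μ) (h : cov μ V ε = 0) (c : ℝ) :
    cov μ (c • V + ε) (c • V + ε) = c ^ 2 * cov μ V V + cov μ ε ε := by
  have hcV := hV.const_smul c
  rw [cov_eq_covariance_s10 hV hε] at h
  rw [cov_eq_covariance_s10 (hcV.add hε) (hcV.add hε), cov_eq_covariance_s10 hV hV,
    cov_eq_covariance_s10 hε hε, covariance_add_left hcV hε (hcV.add hε),
    covariance_add_right hcV hcV hε, covariance_add_right hε hcV hε]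
  simp only [covariance_smul_left, covariance_smul_right, covariance_comm ε V, h]
  ring

end Covariance

lemma Real.sign_mul_of_pos_left {κ x : ℝ} (hκ : 0 < κ) : Real.sign (κ * x) = Real.sign x := by
  rcases lt_trichotomy x 0 with hx | rfl | hx
  · rw [Real.sign_of_neg hx, Real.sign_of_neg (mul_neg_of_pos_of_neg hκ hx)]
  · rw [mul_zero]
  · rw [Real.sign_of_pos hx, Real.sign_of_pos (mul_pos hκ hx)]

section ChainAlgebra

variable {σXX σXY σYY δ v : ℝ}

lemma chain_partialCov_eq (hD : δ ^ 2 * σYY + v ≠ 0) :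
    σXY - δ * σXY * (δ * σYY) / (δ ^ 2 * σYY + v) = v / (δ ^ 2 * σYY + v) * σXY := by
  field_simp
  ring

lemma chain_partialVar_eq (hD : δ ^ 2 * σYY + v ≠ 0) :
    σXX - (δ * σXY) ^ 2 / (δ ^ 2 * σYY + v)
      = (v * σXX + δ ^ 2 * (σXX * σYY - σXY ^ 2)) / (δ ^ 2 * σYY + v) := by
  field_simp
  ring

theorem chain_not_collapsible (hδ : δ ≠ 0) (hXY : σXY ≠ 0) (hv : 0 < v) (hXX : 0 < σXX)
    (hCS : σXY ^ 2 < σXX * σYY) :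
    σXY - δ * σXY * (δ * σYY) / (δ ^ 2 * σYY + v) ≠ σXY ∧
    (σXY - δ * σXY * (δ * σYY) / (δ ^ 2 * σYY + v))
        / (σXX - (δ * σXY) ^ 2 / (δ ^ 2 * σYY + v)) ≠ σXY / σXX ∧
    Real.sign (σXY - δ * σXY * (δ * σYY) / (δ ^ 2 * σYY + v)) = Real.sign σXY := by
  have hYY : 0 < σYY := pos_of_mul_pos_right ((sq_nonneg σXY).trans_lt hCS) hXX.le
  have hD : 0 < δ ^ 2 * σYY + v := by positivity
  have hκ : 0 < v / (δ ^ 2 * σYY + v) := div_pos hv hD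
  have hκ1 : v / (δ ^ 2 * σYY + v) ≠ 1 :=
    ((div_lt_one hD).2 (lt_add_of_pos_left v (by positivity))).ne
  rw [chain_partialCov_eq hD.ne', chain_partialVar_eq hD.ne']
  refine ⟨fun h => hκ1 ((mul_left_eq_self₀.1 h).resolve_right hXY), fun h => ?_,
    Real.sign_mul_of_pos_left hκ⟩
  have hG : 0 < σXX * σYY - σXY ^ 2 := sub_pos.2 hCS
  have hN : 0 < v * σXX + δ ^ 2 * (σXX * σYY - σXY ^ 2) :=
    add_pos (mul_pos hv hXX) (mul_pos (by positivity) hG)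
  rw [div_mul_eq_mul_div, div_div_div_cancel_right₀ hD.ne',
    div_eq_div_iff hN.ne' hXX.ne'] at h
  have : σXY * δ ^ 2 * (σXX * σYY - σXY ^ 2) = 0 := by linear_combination -h
  simp [hXY, hδ, hG.ne'] at this

end ChainAlgebra

theorem stmt10_general {Ω : Type*} [MeasurableSpace Ω] (μ : Measure Ω) [IsProbabilityMeasure μ]
    (α δ : ℝ) (hα : α ≠ 0) (hδ : δ ≠ 0) (e : Fin 3 → Ω → ℝ) (X Y S : Ω → ℝ)
    (hindep : iIndepFun e μ)
    (hL2 : ∀ i, MemLp (e i) 2 μ)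
    (hvar : ∀ i, 0 < cov μ (e i) (e i))
    (hX : ∀ ω, X ω = e 0 ω)
    (hY : ∀ ω, Y ω = α * X ω + e 1 ω)
    (hS : ∀ ω, S ω = δ * Y ω + e 2 ω) :
    cov μ X Y - cov μ X S * cov μ S Y / cov μ S S ≠ cov μ X Y ∧
    (cov μ X Y - cov μ X S * cov μ S Y / cov μ S S)
        / (cov μ X X - (cov μ X S) ^ 2 / cov μ S S)
      ≠ cov μ X Y / cov μ X X ∧
    Real.sign (cov μ X Y - cov μ X S * cov μ S Y / cov μ S S)
      = Real.sign (cov μ X Y) := by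
  obtain rfl : X = e 0 := funext hX
  have hYe : Y = α • e 0 + e 1 := funext hY
  have hSe : S = δ • Y + e 2 := funext hS
  have hYℓ : MemLp Y 2 μ := hYe ▸ ((hL2 0).const_smul α).add (hL2 1)
  have huncor : ∀ i j, i ≠ j → cov μ (e i) (e j) = 0 := fun i j hij => by
    rw [cov_eq_covariance_s10 (hL2 i) (hL2 j)]
    exact (hindep.indepFun hij).covariance_eq_zero (hL2 i) (hL2 j)
  have hYε : cov μ Y (e 2) = 0 := by
    rw [cov_comm, hYe, cov_smul_add_right (hL2 2) (hL2 0) (hL2 1) (huncor 2 1 (by decide)),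
      huncor 2 0 (by decide), mul_zero]
  have cXY : cov μ (e 0) Y = α * cov μ (e 0) (e 0) := by
    rw [hYe]; exact cov_smul_add_right (hL2 0) (hL2 0) (hL2 1) (huncor 0 1 (by decide)) α
  have cYY : cov μ Y Y = α ^ 2 * cov μ (e 0) (e 0) + cov μ (e 1) (e 1) := by
    rw [hYe]; exact cov_smul_add_self (hL2 0) (hL2 1) (huncor 0 1 (by decide)) α
  have cXS : cov μ (e 0) S = δ * cov μ (e 0) Y := by
    rw [hSe]; exact cov_smul_add_right (hL2 0) hYℓ (hL2 2) (huncor 0 2 (by decide)) δ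
  have cSY : cov μ S Y = δ * cov μ Y Y := by
    rw [cov_comm, hSe]; exact cov_smul_add_right hYℓ hYℓ (hL2 2) hYε δ
  have cSS : cov μ S S = δ ^ 2 * cov μ Y Y + cov μ (e 2) (e 2) := by
    rw [hSe]; exact cov_smul_add_self hYℓ (hL2 2) hYε δ
  have hCS : cov μ (e 0) Y ^ 2 < cov μ (e 0) (e 0) * cov μ Y Y := by
    rw [cXY, cYY]
    nlinarith [mul_pos (hvar 0) (hvar 1)]
  rw [cXS, cSY, cSS]
  exact chain_not_collapsible hδ (cXY ▸ mul_ne_zero hα (hvar 0).ne') (hvar 2) (hvar 0) hCS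

/-- For the diagram X → Y → S with α ≠ 0, δ ≠ 0: neither the covariance nor the
regression coefficient of Y on X is collapsible over S, yet the sign of the covariance
is preserved. -/
theorem stmt10 {Ω : Type*} [MeasurableSpace Ω] (μ : Measure Ω) [IsProbabilityMeasure μ]
    (α δ : ℝ) (hα : α ≠ 0) (hδ : δ ≠ 0) (e : Fin 3 → Ω → ℝ) (X Y S : Ω → ℝ)
    (hmeas : ∀ i, Measurable (e i))
    (hindep : iIndepFun e μ)
    (hL2 : ∀ i, MemLp (e i) 2 μ)
    (hmean : ∀ i, ∫ ω, e i ω ∂μ = 0)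
    (hvar : ∀ i, 0 < cov μ (e i) (e i))
    (hX : ∀ ω, X ω = e 0 ω)
    (hY : ∀ ω, Y ω = α * X ω + e 1 ω)
    (hS : ∀ ω, S ω = δ * Y ω + e 2 ω) :
    cov μ X Y - cov μ X S * cov μ S Y / cov μ S S ≠ cov μ X Y ∧
    (cov μ X Y - cov μ X S * cov μ S Y / cov μ S S)
        / (cov μ X X - (cov μ X S) ^ 2 / cov μ S S)
      ≠ cov μ X Y / cov μ X X ∧
    Real.sign (cov μ X Y - cov μ X S * cov μ S Y / cov μ S S)
      = Real.sign (cov μ X Y) :=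
  stmt10_general μ α δ hα hδ e X Y S hindep hL2 hvar hX hY hS
end

section
/- In a mixed graph (directed and bidirected edges), there is a Z-open route from X to Y if and only if there is a Z-open path from X to Y; moreover the path can be chosen so that its edge set is a subset of the edge set of the route. -/
/-- A mixed graph: directed edges `dir` and (symmetric) bidirected edges `bidir`. -/
structure MixedGraph (V : Type*) where
  dir : V → V → Prop
  bidir : V → V → Prop
  bidir_symm : ∀ a b, bidir a b → bidir b a

namespace MixedGraph

variable {V : Type*} (G : MixedGraph V)

/-- A route (walk) from `a` to `c`: nodes may repeat.  Each step records the kind of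
edge traversed: `fwd` is `a → b`, `bwd` is `a ← b`, `bi` is `a ↔ b`. -/
inductive Walk : V → V → Type _
  | nil (v : V) : Walk v v
  | fwd (a b c : V) (h : G.dir a b) (w : Walk b c) : Walk a c
  | bwd (a b c : V) (h : G.dir b a) (w : Walk b c) : Walk a c
  | bi (a b c : V) (h : G.bidir a b) (w : Walk b c) : Walk a c

variable {G}

/-- Whether the first edge of a walk (if any) has an arrowhead at its starting node. -/
def headStart : ∀ {a c : V}, G.Walk a c → Option Bool
  | _, _, .nil _ => none
  | _, _, .fwd _ _ _ _ _ => some false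
  | _, _, .bwd _ _ _ _ _ => some true
  | _, _, .bi _ _ _ _ _ => some true

/-- Auxiliary: the interior occurrence contributed by node `b` when it is entered by an
edge with arrowhead-at-`b` status `hIn` and followed by the walk `w`. -/
def interiorAt {b c : V} (hIn : Bool) (bv : V) (w : G.Walk b c) : List (Bool × V × Bool) :=
  match headStart w with
  | none => []
  | some hOut => [(hIn, bv, hOut)]

/-- The list of interior occurrences of a walk: for each interior node, whether the
preceding edge has an arrowhead at it, the node, and whether the following edge has an
arrowhead at it. -/
def interiors : ∀ {a c : V}, G.Walk a c → List (Bool × V × Bool)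
  | _, _, .nil _ => []
  | _, _, .fwd _ b _ _ w => interiorAt true b w ++ interiors w
  | _, _, .bwd _ b _ _ w => interiorAt false b w ++ interiors w
  | _, _, .bi _ b _ _ w => interiorAt true b w ++ interiors w

/-- A node is a collider on a walk if it occurs in a configuration `A *→ C ←* B`. -/
def IsCollider {a c : V} (w : G.Walk a c) (C : V) : Prop :=
  ∃ t ∈ interiors w, t.2.1 = C ∧ t.1 = true ∧ t.2.2 = true

/-- A node is a non-collider on a walk if it has an interior occurrence that is not a
collider configuration. -/
def IsNonCollider {a c : V} (w : G.Walk a c) (C : V) : Prop :=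
  ∃ t ∈ interiors w, t.2.1 = C ∧ ¬(t.1 = true ∧ t.2.2 = true)

/-- The list of nodes visited by a walk. -/
def support : ∀ {a c : V}, G.Walk a c → List V
  | _, _, .nil v => [v]
  | _, _, .fwd a _ _ _ w => a :: support w
  | _, _, .bwd a _ _ _ w => a :: support w
  | _, _, .bi a _ _ _ w => a :: support w

/-- A path is a walk whose nodes are all distinct. -/
def IsPath {a c : V} (w : G.Walk a c) : Prop := (support w).Nodup

/-- The edges of a walk: `Sum.inl (a, b)` is the directed edge `a → b`,
`Sum.inr (a, b)` the bidirected edge `a ↔ b` (recorded in both orientations). -/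
def edges : ∀ {a c : V}, G.Walk a c → Set ((V × V) ⊕ (V × V))
  | _, _, .nil _ => ∅
  | _, _, .fwd a b _ _ w => insert (Sum.inl (a, b)) (edges w)
  | _, _, .bwd a b _ _ w => insert (Sum.inl (b, a)) (edges w)
  | _, _, .bi a b _ _ w => insert (Sum.inr (a, b)) (insert (Sum.inr (b, a)) (edges w))

/-- `Desc a b`: `b` is a descendant of `a` (via directed edges, reflexively). -/
def Desc : V → V → Prop := Relation.ReflTransGen G.dir

/-- A route is Z-open if every collider on it is in Z and every non-collider on it is
outside Z. -/
def ZOpenRoute {a c : V} (w : G.Walk a c) (Z : Set V) : Prop :=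
  (∀ C, IsCollider w C → C ∈ Z) ∧ (∀ C, IsNonCollider w C → C ∉ Z)

/-- A path is Z-open if every collider on it is in Z or has a descendant in Z, and every
non-collider on it is outside Z. -/
def ZOpenPath {a c : V} (w : G.Walk a c) (Z : Set V) : Prop :=
  (∀ C, IsCollider w C → C ∈ Z ∨ ∃ D ∈ Z, G.Desc C D) ∧
  (∀ C, IsNonCollider w C → C ∉ Z)

end MixedGraph
namespace MixedGraph

variable {V : Type*} {G : MixedGraph V} {Z : Set V}

@[simp] lemma support_nil (v : V) : support (G := G) (.nil v) = [v] := rfl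
@[simp] lemma support_fwd (a b c : V) (h : G.dir a b) (w : G.Walk b c) :
    support (.fwd a b c h w) = a :: support w := rfl
@[simp] lemma support_bwd (a b c : V) (h : G.dir b a) (w : G.Walk b c) :
    support (.bwd a b c h w) = a :: support w := rfl
@[simp] lemma support_bi (a b c : V) (h : G.bidir a b) (w : G.Walk b c) :
    support (.bi a b c h w) = a :: support w := rfl

@[simp] lemma headStart_nil (v : V) : headStart (G := G) (.nil v) = none := rfl
@[simp] lemma headStart_fwd (a b c : V) (h : G.dir a b) (w : G.Walk b c) :
    headStart (.fwd a b c h w) = some false := rfl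
@[simp] lemma headStart_bwd (a b c : V) (h : G.dir b a) (w : G.Walk b c) :
    headStart (.bwd a b c h w) = some true := rfl
@[simp] lemma headStart_bi (a b c : V) (h : G.bidir a b) (w : G.Walk b c) :
    headStart (.bi a b c h w) = some true := rfl

@[simp] lemma interiors_nil (v : V) : interiors (G := G) (.nil v) = [] := rfl
@[simp] lemma interiors_fwd (a b c : V) (h : G.dir a b) (w : G.Walk b c) :
    interiors (.fwd a b c h w) = interiorAt true b w ++ interiors w := rfl
@[simp] lemma interiors_bwd (a b c : V) (h : G.dir b a) (w : G.Walk b c) :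
    interiors (.bwd a b c h w) = interiorAt false b w ++ interiors w := rfl
@[simp] lemma interiors_bi (a b c : V) (h : G.bidir a b) (w : G.Walk b c) :
    interiors (.bi a b c h w) = interiorAt true b w ++ interiors w := rfl

@[simp] lemma edges_nil (v : V) : edges (G := G) (.nil v) = ∅ := rfl
@[simp] lemma edges_fwd (a b c : V) (h : G.dir a b) (w : G.Walk b c) :
    edges (.fwd a b c h w) = insert (Sum.inl (a, b)) (edges w) := rfl
@[simp] lemma edges_bwd (a b c : V) (h : G.dir b a) (w : G.Walk b c) :
    edges (.bwd a b c h w) = insert (Sum.inl (b, a)) (edges w) := rfl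
@[simp] lemma edges_bi (a b c : V) (h : G.bidir a b) (w : G.Walk b c) :
    edges (.bi a b c h w) = insert (Sum.inr (a, b)) (insert (Sum.inr (b, a)) (edges w)) := rfl

lemma mem_interiorAt {b c : V} {hIn : Bool} {bv : V} {w : G.Walk b c} {t : Bool × V × Bool} :
    t ∈ interiorAt hIn bv w ↔ ∃ hOut, headStart w = some hOut ∧ t = (hIn, bv, hOut) := by
  unfold interiorAt
  cases hh : headStart w <;> simp

/-- `Good` triple condition for the path notion. -/
def Good (G : MixedGraph V) (Z : Set V) (t : Bool × V × Bool) : Prop :=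
  (t.1 = true ∧ t.2.2 = true → t.2.1 ∈ Z ∨ ∃ D ∈ Z, G.Desc t.2.1 D) ∧
  (¬(t.1 = true ∧ t.2.2 = true) → t.2.1 ∉ Z)

/-- `GoodR` triple condition for the route notion. -/
def GoodR (Z : Set V) (t : Bool × V × Bool) : Prop :=
  (t.1 = true ∧ t.2.2 = true → t.2.1 ∈ Z) ∧
  (¬(t.1 = true ∧ t.2.2 = true) → t.2.1 ∉ Z)

lemma zOpenPath_iff {a c : V} {w : G.Walk a c} :
    ZOpenPath w Z ↔ ∀ t ∈ interiors w, Good G Z t := by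
  constructor
  · rintro ⟨h1, h2⟩ t ht
    constructor
    · rintro ⟨e1, e2⟩
      exact h1 t.2.1 ⟨t, ht, rfl, e1, e2⟩
    · intro hnc
      exact h2 t.2.1 ⟨t, ht, rfl, hnc⟩
  · intro h
    constructor
    · rintro C ⟨t, ht, rfl, e1, e2⟩
      exact (h t ht).1 ⟨e1, e2⟩
    · rintro C ⟨t, ht, rfl, hnc⟩
      exact (h t ht).2 hnc

lemma zOpenRoute_iff {a c : V} {w : G.Walk a c} :
    ZOpenRoute w Z ↔ ∀ t ∈ interiors w, GoodR Z t := by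
  constructor
  · rintro ⟨h1, h2⟩ t ht
    constructor
    · rintro ⟨e1, e2⟩
      exact h1 t.2.1 ⟨t, ht, rfl, e1, e2⟩
    · intro hnc
      exact h2 t.2.1 ⟨t, ht, rfl, hnc⟩
  · intro h
    constructor
    · rintro C ⟨t, ht, rfl, e1, e2⟩
      exact (h t ht).1 ⟨e1, e2⟩
    · rintro C ⟨t, ht, rfl, hnc⟩
      exact (h t ht).2 hnc

lemma GoodR.good {t : Bool × V × Bool} (h : GoodR Z t) : Good G Z t :=
  ⟨fun hc => Or.inl (h.1 hc), h.2⟩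

end MixedGraph
namespace MixedGraph

variable {V : Type*} [DecidableEq V] {G : MixedGraph V} {Z : Set V}

/-- The suffix of a walk starting at the first occurrence of `a`. -/
def dropTo : ∀ {b c : V} (w : G.Walk b c) (a : V), a ∈ support w → G.Walk a c
  | _, _, .nil v, a, hm => by
      rw [show a = v by simpa using hm]; exact .nil v
  | _, _, .fwd b d c h w, a, hm =>
      if hab : a = b then by rw [hab]; exact .fwd b d c h w
      else dropTo w a (by simpa [hab] using hm)
  | _, _, .bwd b d c h w, a, hm =>
      if hab : a = b then by rw [hab]; exact .bwd b d c h w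
      else dropTo w a (by simpa [hab] using hm)
  | _, _, .bi b d c h w, a, hm =>
      if hab : a = b then by rw [hab]; exact .bi b d c h w
      else dropTo w a (by simpa [hab] using hm)

@[simp] lemma dropTo_head : ∀ {b c : V} (w : G.Walk b c) (hm : b ∈ support w),
    dropTo w b hm = w
  | _, _, .nil v, hm => rfl
  | _, _, .fwd b d c h w, hm => by rw [dropTo, dif_pos rfl]; rfl
  | _, _, .bwd b d c h w, hm => by rw [dropTo, dif_pos rfl]; rfl
  | _, _, .bi b d c h w, hm => by rw [dropTo, dif_pos rfl]; rfl

lemma interiors_dropTo_subset : ∀ {b c : V} (w : G.Walk b c) (a : V) (hm : a ∈ support w),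
    ∀ t ∈ interiors (dropTo w a hm), t ∈ interiors w
  | _, _, .nil v, a, hm => by
      have hav : a = v := by simpa using hm
      subst hav; simp
  | _, _, .fwd b d c h w, a, hm => by
      by_cases hab : a = b
      · subst hab; simp
      · rw [dropTo]; rw [dif_neg hab]
        intro t ht
        have := interiors_dropTo_subset w a (by simpa [hab] using hm) t ht
        simp [this]
  | _, _, .bwd b d c h w, a, hm => by
      by_cases hab : a = b
      · subst hab; simp
      · rw [dropTo]; rw [dif_neg hab]
        intro t ht
        have := interiors_dropTo_subset w a (by simpa [hab] using hm) t ht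
        simp [this]
  | _, _, .bi b d c h w, a, hm => by
      by_cases hab : a = b
      · subst hab; simp
      · rw [dropTo]; rw [dif_neg hab]
        intro t ht
        have := interiors_dropTo_subset w a (by simpa [hab] using hm) t ht
        simp [this]

lemma edges_dropTo_subset : ∀ {b c : V} (w : G.Walk b c) (a : V) (hm : a ∈ support w),
    edges (dropTo w a hm) ⊆ edges w
  | _, _, .nil v, a, hm => by
      have hav : a = v := by simpa using hm
      subst hav; simp
  | _, _, .fwd b d c h w, a, hm => by
      by_cases hab : a = b
      · subst hab; simp
      · rw [dropTo]; rw [dif_neg hab]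
        exact (edges_dropTo_subset w a (by simpa [hab] using hm)).trans
          (by simp [Set.subset_insert])
  | _, _, .bwd b d c h w, a, hm => by
      by_cases hab : a = b
      · subst hab; simp
      · rw [dropTo]; rw [dif_neg hab]
        exact (edges_dropTo_subset w a (by simpa [hab] using hm)).trans
          (by simp [Set.subset_insert])
  | _, _, .bi b d c h w, a, hm => by
      by_cases hab : a = b
      · subst hab; simp
      · rw [dropTo]; rw [dif_neg hab]
        refine (edges_dropTo_subset w a (by simpa [hab] using hm)).trans ?_
        intro x hx; simp [hx]

lemma length_dropTo_le : ∀ {b c : V} (w : G.Walk b c) (a : V) (hm : a ∈ support w),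
    (support (dropTo w a hm)).length ≤ (support w).length
  | _, _, .nil v, a, hm => by
      have hav : a = v := by simpa using hm
      subst hav; simp
  | _, _, .fwd b d c h w, a, hm => by
      by_cases hab : a = b
      · subst hab; simp
      · rw [dropTo]; rw [dif_neg hab]
        exact (length_dropTo_le w a (by simpa [hab] using hm)).trans (by simp)
  | _, _, .bwd b d c h w, a, hm => by
      by_cases hab : a = b
      · subst hab; simp
      · rw [dropTo]; rw [dif_neg hab]
        exact (length_dropTo_le w a (by simpa [hab] using hm)).trans (by simp)
  | _, _, .bi b d c h w, a, hm => by
      by_cases hab : a = b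
      · subst hab; simp
      · rw [dropTo]; rw [dif_neg hab]
        exact (length_dropTo_le w a (by simpa [hab] using hm)).trans (by simp)

/-- Lemma F: if the suffix at `a` has a first edge with status `hOut`, then either `a`
is the head of the walk and the suffix is everything, or `a` has an interior occurrence
with out-status `hOut`. -/
lemma headStart_dropTo : ∀ {b c : V} (w : G.Walk b c) (a : V) (hm : a ∈ support w) {hOut : Bool},
    headStart (dropTo w a hm) = some hOut →
    headStart w = some hOut ∧ a = b ∨ ∃ hIn, (hIn, a, hOut) ∈ interiors w
  | _, _, .nil v, a, hm => by
      have hav : a = v := by simpa using hm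
      subst hav; simp
  | _, _, .fwd b d c h w, a, hm => by
      by_cases hab : a = b
      · subst hab; rw [dropTo_head]
        intro hh; exact Or.inl ⟨hh, rfl⟩
      · rw [dropTo]; rw [dif_neg hab]
        intro hh
        rcases headStart_dropTo w a (by simpa [hab] using hm) hh with ⟨h1, h2⟩ | ⟨hIn, hI⟩
        · subst h2
          exact Or.inr ⟨true, by simp [mem_interiorAt, h1]⟩
        · exact Or.inr ⟨hIn, by simp [hI]⟩
  | _, _, .bwd b d c h w, a, hm => by
      by_cases hab : a = b
      · subst hab; rw [dropTo_head]
        intro hh; exact Or.inl ⟨hh, rfl⟩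
      · rw [dropTo]; rw [dif_neg hab]
        intro hh
        rcases headStart_dropTo w a (by simpa [hab] using hm) hh with ⟨h1, h2⟩ | ⟨hIn, hI⟩
        · subst h2
          exact Or.inr ⟨false, by simp [mem_interiorAt, h1]⟩
        · exact Or.inr ⟨hIn, by simp [hI]⟩
  | _, _, .bi b d c h w, a, hm => by
      by_cases hab : a = b
      · subst hab; rw [dropTo_head]
        intro hh; exact Or.inl ⟨hh, rfl⟩
      · rw [dropTo]; rw [dif_neg hab]
        intro hh
        rcases headStart_dropTo w a (by simpa [hab] using hm) hh with ⟨h1, h2⟩ | ⟨hIn, hI⟩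
        · subst h2
          exact Or.inr ⟨true, by simp [mem_interiorAt, h1]⟩
        · exact Or.inr ⟨hIn, by simp [hI]⟩

end MixedGraph
namespace MixedGraph

variable {V : Type*} [DecidableEq V] {G : MixedGraph V} {Z : Set V}

/-- Lemma E: on a walk whose colliders all have a descendant in `Z` (or are in `Z`),
if `a` is a descendant of the start `b`, incoming arrowheads are "charged" via `hhead`,
and the suffix at `a` starts with an arrowhead at `a`, then `a` has a descendant in `Z`. -/
lemma descReach : ∀ {b c : V} (w : G.Walk b c),
    (∀ t ∈ interiors w, t.1 = true → t.2.2 = true → t.2.1 ∈ Z ∨ ∃ D ∈ Z, G.Desc t.2.1 D) →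
    (headStart w = some true → b ∈ Z ∨ ∃ D ∈ Z, G.Desc b D) →
    ∀ (a : V) (hd : G.Desc a b) (hm : a ∈ support w),
    headStart (dropTo w a hm) = some true → ∃ D ∈ Z, G.Desc a D
  | _, _, .nil v, hcol, hhead, a, hd, hm => by
      have hav : a = v := by simpa using hm
      subst hav; simp
  | _, _, .fwd b d c h w, hcol, hhead, a, hd, hm => by
      by_cases hab : a = b
      · subst hab; rw [dropTo_head]; simp
      · rw [dropTo]; rw [dif_neg hab]
        intro hOut
        refine descReach w ?_ ?_ a (hd.tail h) (by simpa [hab] using hm) hOut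
        · intro t ht; exact hcol t (by simp [ht])
        · intro hh
          exact hcol (true, d, true) (by simp [mem_interiorAt, hh]) rfl rfl
  | _, _, .bwd b d c h w, hcol, hhead, a, hd, hm => by
      intro _
      rcases hhead (by simp) with hb | ⟨D, hD, hdesc⟩
      · exact ⟨b, hb, hd⟩
      · exact ⟨D, hD, hd.trans hdesc⟩
  | _, _, .bi b d c h w, hcol, hhead, a, hd, hm => by
      intro _
      rcases hhead (by simp) with hb | ⟨D, hD, hdesc⟩
      · exact ⟨b, hb, hd⟩
      · exact ⟨D, hD, hd.trans hdesc⟩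

end MixedGraph
namespace MixedGraph

variable {V : Type*} [DecidableEq V] {G : MixedGraph V} {Z : Set V}

/-- Remove the first loop of a walk (if any). -/
def splice1 : ∀ {a c : V}, G.Walk a c → G.Walk a c
  | _, _, .nil v => .nil v
  | _, _, .fwd a b c h w =>
      if hm : a ∈ support w then dropTo w a hm else .fwd a b c h (splice1 w)
  | _, _, .bwd a b c h w =>
      if hm : a ∈ support w then dropTo w a hm else .bwd a b c h (splice1 w)
  | _, _, .bi a b c h w =>
      if hm : a ∈ support w then dropTo w a hm else .bi a b c h (splice1 w)

lemma edges_splice1_subset : ∀ {a c : V} (w : G.Walk a c), edges (splice1 w) ⊆ edges w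
  | _, _, .nil v => by simp [splice1]
  | _, _, .fwd a b c h w => by
      rw [splice1]; split
      · exact (edges_dropTo_subset w a _).trans (by simp [Set.subset_insert])
      · simp only [edges_fwd]
        exact Set.insert_subset_insert (edges_splice1_subset w)
  | _, _, .bwd a b c h w => by
      rw [splice1]; split
      · exact (edges_dropTo_subset w a _).trans (by simp [Set.subset_insert])
      · simp only [edges_bwd]
        exact Set.insert_subset_insert (edges_splice1_subset w)
  | _, _, .bi a b c h w => by
      rw [splice1]; split
      · refine (edges_dropTo_subset w a _).trans ?_
        intro x hx; simp [hx]
      · simp only [edges_bi]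
        exact Set.insert_subset_insert (Set.insert_subset_insert (edges_splice1_subset w))

lemma length_splice1_lt : ∀ {a c : V} (w : G.Walk a c), ¬ (support w).Nodup →
    (support (splice1 w)).length < (support w).length
  | _, _, .nil v => by simp
  | _, _, .fwd a b c h w => by
      intro hnd
      rw [splice1]; split
      · exact Nat.lt_succ_of_le ((length_dropTo_le w a _).trans (by simp))
      · next hm =>
        have : ¬ (support w).Nodup := by
          intro hw; exact hnd (by simp [hw, hm])
        simpa using length_splice1_lt w this
  | _, _, .bwd a b c h w => by
      intro hnd
      rw [splice1]; split
      · exact Nat.lt_succ_of_le ((length_dropTo_le w a _).trans (by simp))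
      · next hm =>
        have : ¬ (support w).Nodup := by
          intro hw; exact hnd (by simp [hw, hm])
        simpa using length_splice1_lt w this
  | _, _, .bi a b c h w => by
      intro hnd
      rw [splice1]; split
      · exact Nat.lt_succ_of_le ((length_dropTo_le w a _).trans (by simp))
      · next hm =>
        have : ¬ (support w).Nodup := by
          intro hw; exact hnd (by simp [hw, hm])
        simpa using length_splice1_lt w this

/-- The junction analysis: splicing the tail of a step preserves goodness of the
interior occurrence at the junction node. -/
lemma junction_good {b c : V} (w : G.Walk b c)
    (hg1 : ∀ t ∈ interiors w, Good G Z t) (hk : Bool)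
    (hself : ∀ s, headStart w = some s → Good G Z (hk, b, s))
    {hOut' : Bool} (hh : headStart (splice1 w) = some hOut') :
    Good G Z (hk, b, hOut') := by
  cases w with
  | nil v => simp [splice1] at hh
  | fwd b b2 c h2 w' =>
    rw [splice1] at hh; split at hh
    · next hm2 =>
      -- spliced: suffix of w' at b
      have hocc : ∃ hIn2, (hIn2, b, hOut') ∈ interiors (Walk.fwd b b2 c h2 w') := by
        rcases headStart_dropTo w' b hm2 hh with ⟨h1, h2'⟩ | ⟨hIn2, hI⟩
        · subst h2'
          exact ⟨true, by simp [mem_interiorAt, h1]⟩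
        · exact ⟨hIn2, by simp [hI]⟩
      obtain ⟨hIn2, hI2⟩ := hocc
      constructor
      · rintro ⟨e1, e2⟩
        simp only at e1 e2; subst e1; subst e2
        -- collider case: headStart w = some false, use descReach
        refine Or.inr (descReach w' ?_ ?_ b (Relation.ReflTransGen.single h2) hm2 hh)
        · intro t ht _ _
          exact (hg1 t (by simp [ht])).1 (by simp_all)
        · intro hh2
          exact (hg1 (true, b2, true) (by simp [mem_interiorAt, hh2])).1 ⟨rfl, rfl⟩
      · intro hnc
        by_cases hkf : hk = true
        · subst hkf
          have hOf : hOut' = false := by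
            cases hOut' with
            | true => exact absurd ⟨rfl, rfl⟩ hnc
            | false => rfl
          subst hOf
          exact (hg1 (hIn2, b, false) (by simpa using hI2)).2 (by simp)
        · have hkf' : hk = false := by simpa using hkf
          subst hkf'
          exact (hself false (by simp)).2 (by simp)
    · next hm2 =>
      simp only [splice1, headStart_fwd] at hh
      obtain rfl : hOut' = false := by simpa using hh
      exact hself false (by simp)
  | bwd b b2 c h2 w' =>
    rw [splice1] at hh; split at hh
    · next hm2 =>
      have hocc : ∃ hIn2, (hIn2, b, hOut') ∈ interiors (Walk.bwd b b2 c h2 w') := by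
        rcases headStart_dropTo w' b hm2 hh with ⟨h1, h2'⟩ | ⟨hIn2, hI⟩
        · subst h2'
          exact ⟨false, by simp [mem_interiorAt, h1]⟩
        · exact ⟨hIn2, by simp [hI]⟩
      obtain ⟨hIn2, hI2⟩ := hocc
      constructor
      · rintro ⟨e1, e2⟩
        simp only at e1 e2; subst e1; subst e2
        exact (hself true (by simp)).1 ⟨rfl, rfl⟩
      · intro hnc
        by_cases hkf : hk = true
        · subst hkf
          have hOf : hOut' = false := by
            cases hOut' with
            | true => exact absurd ⟨rfl, rfl⟩ hnc
            | false => rfl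
          subst hOf
          exact (hg1 (hIn2, b, false) (by simpa using hI2)).2 (by simp)
        · have hkf' : hk = false := by simpa using hkf
          subst hkf'
          exact (hself true (by simp)).2 (by simp)
    · next hm2 =>
      simp only [splice1, headStart_bwd] at hh
      obtain rfl : hOut' = true := by simpa using hh
      exact hself true (by simp)
  | bi b b2 c h2 w' =>
    rw [splice1] at hh; split at hh
    · next hm2 =>
      have hocc : ∃ hIn2, (hIn2, b, hOut') ∈ interiors (Walk.bi b b2 c h2 w') := by
        rcases headStart_dropTo w' b hm2 hh with ⟨h1, h2'⟩ | ⟨hIn2, hI⟩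
        · subst h2'
          exact ⟨true, by simp [mem_interiorAt, h1]⟩
        · exact ⟨hIn2, by simp [hI]⟩
      obtain ⟨hIn2, hI2⟩ := hocc
      constructor
      · rintro ⟨e1, e2⟩
        simp only at e1 e2; subst e1; subst e2
        exact (hself true (by simp)).1 ⟨rfl, rfl⟩
      · intro hnc
        by_cases hkf : hk = true
        · subst hkf
          have hOf : hOut' = false := by
            cases hOut' with
            | true => exact absurd ⟨rfl, rfl⟩ hnc
            | false => rfl
          subst hOf
          exact (hg1 (hIn2, b, false) (by simpa using hI2)).2 (by simp)
        · have hkf' : hk = false := by simpa using hkf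
          subst hkf'
          exact (hself true (by simp)).2 (by simp)
    · next hm2 =>
      simp only [splice1, headStart_bi] at hh
      obtain rfl : hOut' = true := by simpa using hh
      exact hself true (by simp)

lemma splice1_good : ∀ {a c : V} (w : G.Walk a c),
    (∀ t ∈ interiors w, Good G Z t) → ∀ t ∈ interiors (splice1 w), Good G Z t
  | _, _, .nil v => by simp [splice1]
  | _, _, .fwd a b c h w => by
      intro hg
      rw [splice1]; split
      · next hm =>
        intro t ht
        exact hg t (by simp [interiors_dropTo_subset w a hm t ht])
      · next hm =>
        intro t ht
        rw [interiors_fwd, List.mem_append] at ht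
        rcases ht with ht | ht
        · rw [mem_interiorAt] at ht
          obtain ⟨hOut', hh, rfl⟩ := ht
          refine junction_good w (fun t ht => hg t (by simp [ht])) true ?_ hh
          intro s hs
          exact hg (true, b, s) (by simp [mem_interiorAt, hs])
        · exact splice1_good w (fun t ht => hg t (by simp [ht])) t ht
  | _, _, .bwd a b c h w => by
      intro hg
      rw [splice1]; split
      · next hm =>
        intro t ht
        exact hg t (by simp [interiors_dropTo_subset w a hm t ht])
      · next hm =>
        intro t ht
        rw [interiors_bwd, List.mem_append] at ht
        rcases ht with ht | ht
        · rw [mem_interiorAt] at ht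
          obtain ⟨hOut', hh, rfl⟩ := ht
          refine junction_good w (fun t ht => hg t (by simp [ht])) false ?_ hh
          intro s hs
          exact hg (false, b, s) (by simp [mem_interiorAt, hs])
        · exact splice1_good w (fun t ht => hg t (by simp [ht])) t ht
  | _, _, .bi a b c h w => by
      intro hg
      rw [splice1]; split
      · next hm =>
        intro t ht
        exact hg t (by simp [interiors_dropTo_subset w a hm t ht])
      · next hm =>
        intro t ht
        rw [interiors_bi, List.mem_append] at ht
        rcases ht with ht | ht
        · rw [mem_interiorAt] at ht
          obtain ⟨hOut', hh, rfl⟩ := ht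
          refine junction_good w (fun t ht => hg t (by simp [ht])) true ?_ hh
          intro s hs
          exact hg (true, b, s) (by simp [mem_interiorAt, hs])
        · exact splice1_good w (fun t ht => hg t (by simp [ht])) t ht

/-- Extraction of a Z-open path from a Z-open walk. -/
lemma exists_path : ∀ (n : ℕ) {a c : V} (w : G.Walk a c), (support w).length ≤ n →
    (∀ t ∈ interiors w, Good G Z t) →
    ∃ p : G.Walk a c, IsPath p ∧ (∀ t ∈ interiors p, Good G Z t) ∧ edges p ⊆ edges w := by
  intro n
  induction n with
  | zero =>
    intro a c w hle
    cases w <;> simp at hle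
  | succ n ih =>
    intro a c w hle hg
    by_cases hnd : (support w).Nodup
    · exact ⟨w, hnd, hg, le_refl _⟩
    · have hlt := length_splice1_lt w hnd
      obtain ⟨p, hp, hpg, hpe⟩ := ih (splice1 w) (by omega) (splice1_good w hg)
      exact ⟨p, hp, hpg, hpe.trans (edges_splice1_subset w)⟩

end MixedGraph
namespace MixedGraph

variable {V : Type*} [DecidableEq V] {G : MixedGraph V} {Z : Set V}

/-- Detour construction: if `b ∉ Z` has a descendant in `Z`, then any walk `w` from `b`
can be prefixed (at `b`) with a round trip down to the first `Z`-member descendant and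
back, producing a walk whose first edge leaves `b` with a tail, whose new interior
occurrences are all route-good, and which puts an occurrence `(false, b, _)` before `w`. -/
lemma exists_detour {D : V} (hD : D ∈ Z) : ∀ {b : V}, G.Desc b D → b ∉ Z →
    ∀ {c : V} (w : G.Walk b c),
    ∃ u : G.Walk b c, headStart u = some false ∧
      ∃ L, interiors u = L ++ (interiorAt false b w ++ interiors w) ∧
        ∀ t ∈ L, GoodR Z t := by
  intro b hdesc
  induction hdesc using Relation.ReflTransGen.head_induction_on with
  | refl => intro hbz; exact absurd hD hbz
  | @head b b' h htail ih =>
    intro hbz c w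
    by_cases hb'z : b' ∈ Z
    · refine ⟨.fwd b b' c h (.bwd b' b c h w), by simp,
        [(true, b', true)], rfl, ?_⟩
      rintro t ht
      simp only [List.mem_singleton] at ht
      subst ht
      exact ⟨fun _ => hb'z, fun hnc => absurd ⟨rfl, rfl⟩ hnc⟩
    · obtain ⟨u', hu'h, L', hL', hLg⟩ := ih hb'z (.bwd b' b c h w)
      refine ⟨.fwd b b' c h u', by simp,
        (true, b', false) :: (L' ++ [(false, b', true)]), ?_, ?_⟩
      · rw [interiors_fwd, hL']
        rw [interiorAt, hu'h]
        simp [interiorAt]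
      · intro t ht
        simp only [List.mem_cons, List.mem_append, List.mem_singleton,
          List.not_mem_nil, or_false] at ht
        rcases ht with rfl | ht | rfl
        · exact ⟨by simp, fun _ => hb'z⟩
        · exact hLg t ht
        · exact ⟨by simp, fun _ => hb'z⟩

/-- One step of the route construction. -/
lemma step_route {b c : V} (r' : G.Walk b c) (hrg : ∀ t ∈ interiors r', GoodR Z t)
    (hk : Bool) (hgood : ∀ s, headStart r' = some s → Good G Z (hk, b, s)) :
    ∃ u : G.Walk b c, ∀ t ∈ interiorAt hk b u ++ interiors u, GoodR Z t := by
  cases hh : headStart r' with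
  | none =>
    refine ⟨r', ?_⟩
    intro t ht
    rw [List.mem_append, mem_interiorAt] at ht
    rcases ht with ⟨hOut, hh2, rfl⟩ | ht
    · rw [hh] at hh2; exact absurd hh2 (by simp)
    · exact hrg t ht
  | some s =>
    have hG : Good G Z (hk, b, s) := hgood s hh
    by_cases hcs : hk = true ∧ s = true
    · obtain ⟨rfl, rfl⟩ := hcs
      by_cases hbZ : b ∈ Z
      · refine ⟨r', ?_⟩
        intro t ht
        rw [List.mem_append, mem_interiorAt] at ht
        rcases ht with ⟨hOut, hh2, rfl⟩ | ht
        · exact ⟨fun _ => hbZ, fun hnc => absurd ⟨rfl, (by rw [hh] at hh2; simpa using hh2.symm)⟩ hnc⟩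
        · exact hrg t ht
      · rcases hG.1 ⟨rfl, rfl⟩ with hbZ' | ⟨D, hD, hdesc⟩
        · exact absurd hbZ' hbZ
        obtain ⟨u, huh, L, hL, hLg⟩ := exists_detour hD hdesc hbZ r'
        refine ⟨u, ?_⟩
        intro t ht
        rw [List.mem_append, mem_interiorAt] at ht
        rcases ht with ⟨hOut, hh2, rfl⟩ | ht
        · rw [huh] at hh2
          obtain rfl : hOut = false := by simpa using hh2.symm
          exact ⟨fun hc => absurd hc.2 (by simp), fun _ => hbZ⟩
        · rw [hL] at ht
          simp only [List.mem_append, mem_interiorAt] at ht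
          rcases ht with ht | ⟨hOut, hh2, rfl⟩ | ht
          · exact hLg t ht
          · exact ⟨fun hc => absurd hc.1 (by simp), fun _ => hbZ⟩
          · exact hrg t ht
    · have hbz : b ∉ Z := hG.2 (by simpa using hcs)
      refine ⟨r', ?_⟩
      intro t ht
      rw [List.mem_append, mem_interiorAt] at ht
      rcases ht with ⟨hOut, hh2, rfl⟩ | ht
      · rw [hh] at hh2
        obtain rfl : hOut = s := by simpa using hh2.symm
        exact ⟨fun hc => absurd hc hcs, fun _ => hbz⟩
      · exact hrg t ht

/-- From a Z-open walk (path-style openness) one can build a route-style Z-open walk. -/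
lemma exists_route : ∀ {a c : V} (p : G.Walk a c), (∀ t ∈ interiors p, Good G Z t) →
    ∃ r : G.Walk a c, headStart r = headStart p ∧ ∀ t ∈ interiors r, GoodR Z t
  | _, _, .nil v, _ => ⟨.nil v, rfl, by simp⟩
  | _, _, .fwd a b c h p', hg => by
      obtain ⟨r', hrh, hrg⟩ := exists_route p' (fun t ht => hg t (by simp [ht]))
      obtain ⟨u, hu⟩ := step_route r' hrg true
        (fun s hs => hg (true, b, s)
          (by rw [hrh] at hs; simp [mem_interiorAt, hs]))
      exact ⟨.fwd a b c h u, by simp, by simpa using hu⟩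
  | _, _, .bwd a b c h p', hg => by
      obtain ⟨r', hrh, hrg⟩ := exists_route p' (fun t ht => hg t (by simp [ht]))
      obtain ⟨u, hu⟩ := step_route r' hrg false
        (fun s hs => hg (false, b, s)
          (by rw [hrh] at hs; simp [mem_interiorAt, hs]))
      exact ⟨.bwd a b c h u, by simp, by simpa using hu⟩
  | _, _, .bi a b c h p', hg => by
      obtain ⟨r', hrh, hrg⟩ := exists_route p' (fun t ht => hg t (by simp [ht]))
      obtain ⟨u, hu⟩ := step_route r' hrg true
        (fun s hs => hg (true, b, s)
          (by rw [hrh] at hs; simp [mem_interiorAt, hs]))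
      exact ⟨.bi a b c h u, by simp, by simpa using hu⟩

end MixedGraph

open MixedGraph in
/-- Lemma 1 of the paper: there is a Z-open route from X to Y iff there is a Z-open path
from X to Y; moreover, from any Z-open route one can extract a Z-open path whose edges
are a subset of the edges of the route. -/
theorem stmt16 {V : Type*} (G : MixedGraph V) (X Y : V) (Z : Set V) :
    ((∃ r : G.Walk X Y, ZOpenRoute r Z) ↔
      (∃ p : G.Walk X Y, IsPath p ∧ ZOpenPath p Z)) ∧
    (∀ r : G.Walk X Y, ZOpenRoute r Z →
      ∃ p : G.Walk X Y, IsPath p ∧ ZOpenPath p Z ∧ edges p ⊆ edges r) := by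
  classical
  have extract : ∀ r : G.Walk X Y, ZOpenRoute r Z →
      ∃ p : G.Walk X Y, IsPath p ∧ ZOpenPath p Z ∧ edges p ⊆ edges r := by
    intro r hr
    obtain ⟨p, hp, hpg, hpe⟩ := exists_path (Z := Z) (support r).length r le_rfl
      (fun t ht => (zOpenRoute_iff.mp hr t ht).good)
    exact ⟨p, hp, zOpenPath_iff.mpr hpg, hpe⟩
  refine ⟨⟨?_, ?_⟩, extract⟩
  · rintro ⟨r, hr⟩
    obtain ⟨p, hp, hzp, _⟩ := extract r hr
    exact ⟨p, hp, hzp⟩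
  · rintro ⟨p, hp, hzp⟩
    obtain ⟨r, _, hrg⟩ := exists_route p (zOpenPath_iff.mp hzp)
    exact ⟨r, zOpenRoute_iff.mpr hrg⟩
end
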